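/- Under the signature-based reduction, if ℋ admits a Maltsev polymorphism h closed on each list ℒ(α), then the constructed graph instance admits a Maltsev list polymorphism on G ×_L H^3; in particular φ(x̄; ᾱ, β̄, β̄) = ᾱ and φ(x̄; β̄, β̄, ᾱ) = ᾱ for φ(x̄; τ̄_1, τ̄_2, τ̄_3) = overline{h(τ_1,τ_2,τ_3)}. -/

import Mathlib

/-- The signature of two ordered tuples (lists). -/
def Sig {X : Type*} (α β : List X) : Set (ℕ × ℕ) :=
  {p | ∃ v, α[p.1]? = some v ∧ β[p.2]? = some v}

/-- Coordinatewise application of a ternary operation to three lists, producing a list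
of length `n`. -/
def hApply3 {A : Type*} [Inhabited A] (h : A → A → A → A)
    (t₁ t₂ t₃ : List A) (n : ℕ) : List A :=
  (List.range n).map fun i => h (t₁.getD i default) (t₂.getD i default) (t₃.getD i default)

lemma Sig.lt_length {X : Type*} {α β : List X} {p : ℕ × ℕ} (hp : p ∈ Sig α β) :
    p.1 < α.length ∧ p.2 < β.length := by
  obtain ⟨v, hα, hβ⟩ := hp
  exact ⟨(List.getElem?_eq_some_iff.mp hα).1, (List.getElem?_eq_some_iff.mp hβ).1⟩

section hApply3

variable {A : Type*} [Inhabited A] (h : A → A → A → A)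

lemma hApply3_getElem? (t₁ t₂ t₃ : List A) {n i : ℕ} (hi : i < n) :
    (hApply3 h t₁ t₂ t₃ n)[i]? =
      some (h (t₁.getD i default) (t₂.getD i default) (t₃.getD i default)) := by
  simp [hApply3, List.getElem?_range hi]

lemma hApply3_eq_of_getD {t₁ t₂ t₃ t : List A} {n : ℕ} (ht : t.length = n)
    (hcoord : ∀ i < n, h (t₁.getD i default) (t₂.getD i default) (t₃.getD i default) =
      t.getD i default) :
    hApply3 h t₁ t₂ t₃ n = t := by
  refine List.ext_getElem (by simp [hApply3, ht]) fun i hi _ => ?_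
  have hin : i < n := by simpa [hApply3] using hi
  simp only [hApply3, List.getElem_map, List.getElem_range, hcoord i hin]
  exact List.getD_eq_getElem t default (ht ▸ hin)

lemma hApply3_left {t ω : List A} {n : ℕ} (hmal : ∀ a b, h a b b = a) (ht : t.length = n) :
    hApply3 h t ω ω n = t :=
  hApply3_eq_of_getD h ht fun _ _ => hmal _ _

lemma hApply3_right {t ω : List A} {n : ℕ} (hmal : ∀ a b, h b b a = a) (ht : t.length = n) :
    hApply3 h ω ω t n = t :=
  hApply3_eq_of_getD h ht fun _ _ => hmal _ _

lemma mem_Sig_hApply3 {t₁ t₂ t₃ u₁ u₂ u₃ : List A} {m n : ℕ} {p : ℕ × ℕ}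
    (hm : p.1 < m) (hn : p.2 < n)
    (h₁ : p ∈ Sig t₁ u₁) (h₂ : p ∈ Sig t₂ u₂) (h₃ : p ∈ Sig t₃ u₃) :
    p ∈ Sig (hApply3 h t₁ t₂ t₃ m) (hApply3 h u₁ u₂ u₃ n) := by
  obtain ⟨w₁, ht₁, hu₁⟩ := h₁
  obtain ⟨w₂, ht₂, hu₂⟩ := h₂
  obtain ⟨w₃, ht₃, hu₃⟩ := h₃
  refine ⟨h w₁ w₂ w₃, ?_, ?_⟩
  · simp [hApply3_getElem? h _ _ _ hm, List.getD_eq_getElem?_getD, ht₁, ht₂, ht₃]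
  · simp [hApply3_getElem? h _ _ _ hn, List.getD_eq_getElem?_getD, hu₁, hu₂, hu₃]

end hApply3

/-- if the hypergraph lists are closed under a Maltsev operation `h`
(coordinatewise), then the signature-based graph instance admits a Maltsev list
polymorphism `φ(x̄; τ̄₁,τ̄₂,τ̄₃) = h(τ₁,τ₂,τ₃)` on `G ×_L H³`; in particular
`φ(x̄; ᾱ, β̄, β̄) = ᾱ` and `φ(x̄; β̄, β̄, ᾱ) = ᾱ`. -/
theorem hypergraph_maltsev_transfers {X A : Type*} [Inhabited A]
    (𝒢 : Set (List X)) (ℒ : List X → Set (List A))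
    (hlen : ∀ α ∈ 𝒢, ∀ τ ∈ ℒ α, τ.length = α.length)
    (h : A → A → A → A)
    (hmal : ∀ a b : A, h a b b = a ∧ h b b a = a)
    (hclosed : ∀ α ∈ 𝒢, ∀ τ₁ ∈ ℒ α, ∀ τ₂ ∈ ℒ α, ∀ τ₃ ∈ ℒ α,
      hApply3 h τ₁ τ₂ τ₃ α.length ∈ ℒ α) :
    ∃ φ : (x : {l : List X // l ∈ 𝒢}) →
        {t : List A // t ∈ ℒ x.val} → {t : List A // t ∈ ℒ x.val} →
        {t : List A // t ∈ ℒ x.val} → {t : List A // t ∈ ℒ x.val},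
      (∀ x t₁ t₂ t₃, (φ x t₁ t₂ t₃).val = hApply3 h t₁.val t₂.val t₃.val x.val.length) ∧
      (∀ (x y : {l : List X // l ∈ 𝒢}) t₁ t₂ t₃ u₁ u₂ u₃,
        (Sig x.val y.val).Nonempty →
        Sig x.val y.val ⊆ Sig (t₁ : {t : List A // t ∈ ℒ x.val}).val
          (u₁ : {t : List A // t ∈ ℒ y.val}).val →
        Sig x.val y.val ⊆ Sig (t₂ : {t : List A // t ∈ ℒ x.val}).val (u₂ : {t : List A // t ∈ ℒ y.val}).val →
        Sig x.val y.val ⊆ Sig (t₃ : {t : List A // t ∈ ℒ x.val}).val (u₃ : {t : List A // t ∈ ℒ y.val}).val →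
        Sig x.val y.val ⊆ Sig (φ x t₁ t₂ t₃).val (φ y u₁ u₂ u₃).val) ∧
      (∀ x α β, φ x α β β = α ∧ φ x β β α = α) := by
  refine ⟨fun x t₁ t₂ t₃ => ⟨hApply3 h t₁.val t₂.val t₃.val x.val.length,
      hclosed x.val x.prop t₁.val t₁.prop t₂.val t₂.prop t₃.val t₃.prop⟩,
    fun _ _ _ _ => rfl, ?_, ?_⟩
  · intro x y t₁ t₂ t₃ u₁ u₂ u₃ _ hs₁ hs₂ hs₃ p hp
    exact mem_Sig_hApply3 h (Sig.lt_length hp).1 (Sig.lt_length hp).2 (hs₁ hp) (hs₂ hp) (hs₃ hp)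
  · intro x α β
    have hα := hlen x.val x.prop α.val α.prop
    exact ⟨Subtype.ext (hApply3_left h (fun a b => (hmal a b).1) hα),
      Subtype.ext (hApply3_right h (fun a b => (hmal a b).2) hα)⟩
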